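/- Among all probabilities p ∈ [0,1], the Shannon entropy of the Binomial(k,p) distribution is maximized at p = 1/2: for all p ∈ [0,1], H(Bin(k,p)) ≤ H(Bin(k,1/2)). -/

import Mathlib

/-!
Write `X ∼ Bin(k, p)` as the number of ones among `k` independent Bernoulli(`p`) bits; the bits
are determined by `X` and the (uniform) position of its ones, so in nats
`H(Bin(k, p)) = k h(p) - ψ(p)` with `h` the binary entropy and `ψ(p) = E[log (k choose X)]`, the
Bernstein polynomial of `ν ↦ log (k choose ν)`. Differentiating a Bernstein polynomial twice gives
`k (k - 1)` times the Bernstein polynomial of degree `k - 2` of the second differences, and those of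
`log (k choose ν)` are at least `-1/(ν+1) - 1/(k-1-ν)`. Since `E[1/(Y+1)] ≤ 1/((k-1)p)` for
`Y ∼ Bin(k-2, p)`, this gives `ψ'' ≥ -k/p - k/(1-p) = k h''`. Hence the entropy is concave in `p`;
being symmetric under `p ↦ 1 - p`, it is maximal at `1/2`.
-/

open Real Finset

/-- Base-2 Shannon entropy of the Binomial(k, p) distribution. -/
noncomputable def binEntropy (k : ℕ) (p : ℝ) : ℝ :=
  -∑ x ∈ Finset.range (k + 1),
      ((k.choose x : ℝ) * p ^ x * (1 - p) ^ (k - x)) *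
        Real.logb 2 ((k.choose x : ℝ) * p ^ x * (1 - p) ^ (k - x))

open Polynomial

/-- `E[f X]` for `X ∼ Bin(n, p)`, as a polynomial in `p`. -/
noncomputable def bernsteinSum (n : ℕ) (f : ℕ → ℝ) : ℝ[X] :=
  ∑ ν ∈ range (n + 1), C (f ν) * bernsteinPolynomial ℝ n ν

namespace bernsteinSum

theorem eval_eq (n : ℕ) (f : ℕ → ℝ) (p : ℝ) :
    (bernsteinSum n f).eval p =
      ∑ ν ∈ range (n + 1), f ν * (bernsteinPolynomial ℝ n ν).eval p := by
  simp [bernsteinSum, eval_finsetSum]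

theorem congr {n : ℕ} {f g : ℕ → ℝ} (h : ∀ ν ≤ n, f ν = g ν) :
    bernsteinSum n f = bernsteinSum n g :=
  sum_congr rfl fun ν hν => by rw [h ν (Nat.lt_succ_iff.mp (mem_range.mp hν))]

theorem natCast (n : ℕ) : bernsteinSum n (fun ν => ν) = C (n : ℝ) * X := by
  rw [bernsteinSum, C_eq_natCast, ← nsmul_eq_mul, ← bernsteinPolynomial.sum_smul]
  exact sum_congr rfl fun ν _ => by rw [C_eq_natCast, nsmul_eq_mul]

theorem eval_one_sub (n : ℕ) (f : ℕ → ℝ) (p : ℝ) :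
    (bernsteinSum n f).eval (1 - p) = (bernsteinSum n fun ν => f (n - ν)).eval p := by
  rw [eval_eq, eval_eq, ← sum_range_reflect]
  refine sum_congr rfl fun ν hν => ?_
  have hν : ν ≤ n := Nat.lt_succ_iff.mp (mem_range.mp hν)
  rw [Nat.add_sub_cancel, bernsteinPolynomial.flip' ℝ n (n - ν) (Nat.sub_le n ν), eval_comp,
    Nat.sub_sub_self hν]
  simp

theorem derivative_succ (n : ℕ) (f : ℕ → ℝ) :
    derivative (bernsteinSum (n + 1) f) =
      C ((n : ℝ) + 1) * bernsteinSum n (fun ν => f (ν + 1) - f ν) := by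
  have shift : ∑ ν ∈ range (n + 1), C (f (ν + 1)) * bernsteinPolynomial ℝ n (ν + 1) +
      C (f 0) * bernsteinPolynomial ℝ n 0 = bernsteinSum n f := by
    rw [← sum_range_succ' (fun ν => C (f ν) * bernsteinPolynomial ℝ n ν), sum_range_succ,
      bernsteinPolynomial.eq_zero_of_lt ℝ n.lt_succ_self, mul_zero, add_zero, bernsteinSum]
  rw [bernsteinSum, sum_range_succ', derivative_add, derivative_sum]
  simp only [derivative_C_mul, bernsteinPolynomial.derivative_succ_aux,
    bernsteinPolynomial.derivative_zero, Nat.add_sub_cancel]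
  have split : bernsteinSum n (fun ν => f (ν + 1) - f ν) =
      ∑ ν ∈ range (n + 1), C (f (ν + 1)) * bernsteinPolynomial ℝ n ν - bernsteinSum n f := by
    simp only [bernsteinSum, map_sub, sub_mul, sum_sub_distrib]
  rw [split, ← shift]
  simp only [mul_sub, mul_left_comm _ ((n : ℝ[X]) + 1), sum_sub_distrib, ← mul_sum]
  simp only [map_add, map_natCast, map_one, Nat.cast_add, Nat.cast_one]
  ring

theorem derivative_derivative (n : ℕ) (f : ℕ → ℝ) :
    derivative (derivative (bernsteinSum (n + 2) f)) =
      C (((n : ℝ) + 2) * ((n : ℝ) + 1)) *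
        bernsteinSum n (fun ν => f (ν + 2) - 2 * f (ν + 1) + f ν) := by
  rw [derivative_succ, derivative_C_mul, derivative_succ, ← mul_assoc, ← map_mul]
  congr 2
  · push_cast; ring
  · ext ν; ring

theorem eval_le_eval {n : ℕ} {f g : ℕ → ℝ} (h : ∀ ν ≤ n, f ν ≤ g ν) {p : ℝ} (hp₀ : 0 ≤ p)
    (hp₁ : p ≤ 1) : (bernsteinSum n f).eval p ≤ (bernsteinSum n g).eval p := by
  rw [eval_eq, eval_eq]
  refine sum_le_sum fun ν hν =>
    mul_le_mul_of_nonneg_right (h ν (Nat.lt_succ_iff.mp (mem_range.mp hν))) ?_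
  have : 0 ≤ 1 - p := by linarith
  simp only [bernsteinPolynomial, eval_mul, eval_pow, eval_sub, eval_one, eval_X, eval_natCast]
  positivity

theorem neg_add (n : ℕ) (f g : ℕ → ℝ) :
    bernsteinSum n (fun ν => -(f ν + g ν)) = -(bernsteinSum n f + bernsteinSum n g) := by
  simp only [bernsteinSum, map_neg, map_add, neg_mul, add_mul, sum_neg_distrib, sum_add_distrib]

theorem mul_eval_inv_add_one (n : ℕ) (p : ℝ) :
    ((n : ℝ) + 1) * p * (bernsteinSum n fun ν => 1 / ((ν : ℝ) + 1)).eval p =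
      1 - (1 - p) ^ (n + 1) := by
  have total : ∑ ν ∈ range (n + 1), (bernsteinPolynomial ℝ (n + 1) (ν + 1)).eval p =
      1 - (1 - p) ^ (n + 1) := by
    have := congrArg (eval p) (bernsteinPolynomial.sum ℝ (n + 1))
    have h0 : (bernsteinPolynomial ℝ (n + 1) 0).eval p = (1 - p) ^ (n + 1) := by
      simp [bernsteinPolynomial]
    rw [eval_finsetSum, sum_range_succ', eval_one, h0] at this
    linarith
  rw [← total, eval_eq, mul_sum]
  refine sum_congr rfl fun ν _ => ?_
  have hchoose : ((n : ℝ) + 1) * n.choose ν = ((n + 1).choose (ν + 1) : ℝ) * ((ν : ℝ) + 1) := by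
    exact_mod_cast Nat.add_one_mul_choose_eq n ν
  simp only [bernsteinPolynomial, eval_mul, eval_pow, eval_sub, eval_one, eval_X, eval_natCast,
    Nat.add_sub_add_right]
  field_simp
  linear_combination p ^ (ν + 1) * (1 - p) ^ (n - ν) * hchoose

end bernsteinSum

theorem Real.log_add_one_sub_log_le {x : ℝ} (hx : 0 < x) : log (x + 1) - log x ≤ 1 / x := by
  have h := log_le_sub_one_of_pos (div_pos (by linarith : 0 < x + 1) hx)
  rw [log_div (by linarith) hx.ne'] at h
  calc log (x + 1) - log x ≤ (x + 1) / x - 1 := h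
    _ = 1 / x := by field_simp; ring

theorem log_choose_succ_sub_log_choose {m ν : ℕ} (h : ν < m) :
    log (m.choose (ν + 1)) - log (m.choose ν) = log ((m : ℝ) - ν) - log ((ν : ℝ) + 1) := by
  have hrec : (m.choose (ν + 1) : ℝ) * ((ν : ℝ) + 1) = m.choose ν * ((m : ℝ) - ν) := by
    rw [← Nat.cast_sub h.le]
    exact_mod_cast Nat.choose_succ_right_eq m ν
  have h₁ : (0 : ℝ) < m.choose (ν + 1) := by exact_mod_cast Nat.choose_pos h
  have h₀ : (0 : ℝ) < m.choose ν := by exact_mod_cast Nat.choose_pos h.le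
  have hm : (0 : ℝ) < (m : ℝ) - ν := by
    have : (ν : ℝ) < m := by exact_mod_cast h
    linarith
  have := congrArg log hrec
  rw [log_mul h₁.ne' (by positivity), log_mul h₀.ne' hm.ne'] at this
  linarith

theorem neg_le_log_choose_second_diff {n ν : ℕ} (hν : ν ≤ n) :
    -(1 / ((ν : ℝ) + 1) + 1 / (((n - ν : ℕ) : ℝ) + 1)) ≤
      log ((n + 2).choose (ν + 2)) - 2 * log ((n + 2).choose (ν + 1)) +
        log ((n + 2).choose ν) := by
  have d₁ := log_choose_succ_sub_log_choose (m := n + 2) (ν := ν + 1) (by omega)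
  have d₀ := log_choose_succ_sub_log_choose (m := n + 2) (ν := ν) (by omega)
  have b₁ := Real.log_add_one_sub_log_le (x := (ν : ℝ) + 1) (by positivity)
  have b₂ := Real.log_add_one_sub_log_le (x := ((n - ν : ℕ) : ℝ) + 1) (by positivity)
  push_cast [Nat.cast_sub hν] at d₁ d₀ b₂ ⊢
  ring_nf at d₁ d₀ b₁ b₂ ⊢
  linarith

noncomputable def meanLogChoose (k : ℕ) : ℝ[X] :=
  bernsteinSum k fun ν => log (k.choose ν)

theorem eval_one_sub_meanLogChoose (k : ℕ) (p : ℝ) :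
    (meanLogChoose k).eval (1 - p) = (meanLogChoose k).eval p := by
  rw [meanLogChoose, bernsteinSum.eval_one_sub]
  congr 1
  exact bernsteinSum.congr fun ν hν => by simp only [Nat.choose_symm hν]

theorem neg_le_eval_derivative_derivative_meanLogChoose (k : ℕ) {p : ℝ} (hp₀ : 0 < p)
    (hp₁ : p < 1) :
    -(k / p + k / (1 - p)) ≤ (derivative (derivative (meanLogChoose k))).eval p := by
  have hq₀ : 0 < 1 - p := by linarith
  obtain _ | _ | n := k
  · simp [meanLogChoose, bernsteinSum]
  · have : meanLogChoose 1 = 0 := by simp [meanLogChoose, bernsteinSum, sum_range_succ]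
    rw [this]
    simp only [derivative_zero, eval_zero, neg_nonpos]
    positivity
  set e : ℝ → ℝ := fun q => (bernsteinSum n fun ν => 1 / ((ν : ℝ) + 1)).eval q
  have he : ∀ q, 0 < q → q ≤ 1 → ((n : ℝ) + 1) * e q ≤ 1 / q := fun q hq₀ hq₁ => by
    rw [le_div_iff₀ hq₀, mul_right_comm, bernsteinSum.mul_eval_inv_add_one]
    linarith [pow_nonneg (sub_nonneg.mpr hq₁) (n + 1)]
  have hdiff := bernsteinSum.eval_le_eval (n := n)
    (fun ν hν => neg_le_log_choose_second_diff hν) hp₀.le hp₁.le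
  rw [bernsteinSum.neg_add, eval_neg, eval_add,
    ← bernsteinSum.eval_one_sub n fun ν => 1 / ((ν : ℝ) + 1)] at hdiff
  rw [meanLogChoose, bernsteinSum.derivative_derivative, eval_mul, eval_C]
  have h₁ := he p hp₀ hp₁.le
  have h₂ := he (1 - p) hq₀ (by linarith)
  have hbound := mul_le_mul_of_nonneg_left (add_le_add h₁ h₂) (by positivity : (0 : ℝ) ≤ n + 2)
  have hscaled := mul_le_mul_of_nonneg_left hdiff (by positivity : (0 : ℝ) ≤ (n + 2) * (n + 1))
  push_cast
  rw [div_eq_mul_one_div, div_eq_mul_one_div ((n : ℝ) + 1 + 1)]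
  linarith

theorem sum_negMulLog_eval_bernsteinPolynomial (k : ℕ) (p : ℝ) :
    ∑ ν ∈ range (k + 1), negMulLog ((bernsteinPolynomial ℝ k ν).eval p) =
      k * Real.binEntropy p - (meanLogChoose k).eval p := by
  have term : ∀ ν ∈ range (k + 1), negMulLog ((bernsteinPolynomial ℝ k ν).eval p) =
      -(log (k.choose ν) * (bernsteinPolynomial ℝ k ν).eval p) -
        log p * ((ν : ℝ) * (bernsteinPolynomial ℝ k ν).eval p) -
        log (1 - p) * (((k - ν : ℕ) : ℝ) * (bernsteinPolynomial ℝ k ν).eval p) := by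
    intro ν _
    simp only [bernsteinPolynomial, eval_mul, eval_pow, eval_sub, eval_one, eval_X, eval_natCast]
    rw [negMulLog_mul, negMulLog_mul]
    simp only [negMulLog, log_pow]
    ring
  have mean := congrArg (eval p) (bernsteinSum.natCast k)
  have mean' := (bernsteinSum.eval_one_sub k (fun ν => (ν : ℝ)) p).symm.trans
    (congrArg (eval (1 - p)) (bernsteinSum.natCast k))
  simp only [eval_mul, eval_C, eval_X, bernsteinSum.eval_eq] at mean mean'
  rw [sum_congr rfl term, sum_sub_distrib, sum_sub_distrib, sum_neg_distrib, ← mul_sum,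
    ← mul_sum, mean, mean', meanLogChoose, bernsteinSum.eval_eq,
    Real.binEntropy_eq_negMulLog_add_negMulLog_one_sub, negMulLog, negMulLog]
  ring

theorem binEntropy_eq_mul_binEntropy_sub_meanLogChoose (k : ℕ) (p : ℝ) :
    binEntropy k p = (k * Real.binEntropy p - (meanLogChoose k).eval p) / log 2 := by
  rw [← sum_negMulLog_eval_bernsteinPolynomial, _root_.binEntropy, sum_div, ← sum_neg_distrib]
  refine sum_congr rfl fun ν _ => ?_
  simp only [bernsteinPolynomial, eval_mul, eval_pow, eval_sub, eval_one, eval_X, eval_natCast,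
    negMulLog, logb]
  ring

theorem concaveOn_mul_binEntropy_sub (k : ℝ) (q : ℝ[X])
    (hq : ∀ p ∈ Set.Ioo (0 : ℝ) 1, -(k / p + k / (1 - p)) ≤ (derivative (derivative q)).eval p) :
    ConcaveOn ℝ (Set.Icc 0 1) fun p => k * Real.binEntropy p - q.eval p := by
  refine concaveOn_of_hasDerivWithinAt2_nonpos (convex_Icc 0 1)
    (f' := fun p => k * (log (1 - p) - log p) - (derivative q).eval p)
    (f'' := fun p => k * (-(1 - p)⁻¹ - p⁻¹) - (derivative (derivative q)).eval p)
    (by fun_prop) (fun p hp => ?_) (fun p hp => ?_) (fun p hp => ?_) <;>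
    rw [interior_Icc] at hp <;> obtain ⟨hp₀, hp₁⟩ := hp
  · exact (((Real.hasDerivAt_binEntropy hp₀.ne' hp₁.ne).const_mul k).sub
      (q.hasDerivAt p)).hasDerivWithinAt
  · have hlog : HasDerivAt (fun p => log (1 - p)) (-(1 - p)⁻¹) p := by
      simpa [div_eq_mul_inv] using
        ((hasDerivAt_id' p).const_sub 1).log (sub_pos.mpr hp₁).ne'
    exact (((hlog.sub (hasDerivAt_log hp₀.ne')).const_mul k).sub
      ((derivative q).hasDerivAt p)).hasDerivWithinAt
  · have := hq p ⟨hp₀, hp₁⟩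
    simp only [div_eq_mul_inv] at this
    linarith

theorem ConcaveOn.apply_le_apply_half {f : ℝ → ℝ} (hf : ConcaveOn ℝ (Set.Icc 0 1) f)
    (hsymm : ∀ p, f (1 - p) = f p) {p : ℝ} (hp : p ∈ Set.Icc (0 : ℝ) 1) : f p ≤ f (1 / 2) := by
  have h := hf.2 hp ⟨sub_nonneg.mpr hp.2, sub_le_self 1 hp.1⟩ (by norm_num : (0 : ℝ) ≤ 1 / 2)
    (by norm_num : (0 : ℝ) ≤ 1 / 2) (by norm_num)
  simp only [smul_eq_mul, hsymm] at h
  rw [show (1 / 2 : ℝ) * p + 1 / 2 * (1 - p) = 1 / 2 by ring] at h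
  linarith

theorem binEntropy_le_binEntropy_half (k : ℕ) (p : ℝ) (hp0 : 0 ≤ p) (hp1 : p ≤ 1) :
    binEntropy k p ≤ binEntropy k (1 / 2) := by
  have hconc := concaveOn_mul_binEntropy_sub k (meanLogChoose k) fun p hp =>
    neg_le_eval_derivative_derivative_meanLogChoose k hp.1 hp.2
  have hsymm (p : ℝ) : k * Real.binEntropy (1 - p) - (meanLogChoose k).eval (1 - p) =
      k * Real.binEntropy p - (meanLogChoose k).eval p := by
    rw [Real.binEntropy_one_sub, eval_one_sub_meanLogChoose]
  rw [binEntropy_eq_mul_binEntropy_sub_meanLogChoose,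
    binEntropy_eq_mul_binEntropy_sub_meanLogChoose]
  exact div_le_div_of_nonneg_right (hconc.apply_le_apply_half hsymm ⟨hp0, hp1⟩)
    (log_nonneg one_le_two)
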